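/- arXiv:2305.00687 — 5 statements merged into one kernel-verified Lean document; each statement's English description precedes it below -/
import Mathlib

section
/- For every natural number n ≥ 1, max{ψ(a_n), ψ(a_n+1)} ≤ √(n+1), where a_n = ⌊(n+1)/2 − √(n+1)/2⌋ and ψ(t) = (2√n/(n+1))·√(t(n+1−t)) + |1 − 2t/(n+1)|. -/
/-! With `N = n + 1`, `ψ(t) = (2√n·√(t(N - t)) + |N - 2t|) / N`, and Cauchy–Schwarz for the vectors
`(√n, 1)` and `(2√(t(N - t)), |N - 2t|)` gives
`(2√n·√(t(N - t)) + |N - 2t|)² ≤ (n + 1)·(4t(N - t) + (N - 2t)²) = N³`.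
So `ψ ≤ √N` on all of `[0, N]`, and both `a_n` and `a_n + 1` lie in that interval. -/

noncomputable def psi (n : ℕ) (t : ℝ) : ℝ :=
  (2 * Real.sqrt n / (n + 1)) * Real.sqrt (t * (n + 1 - t)) + |1 - 2 * t / (n + 1)|

noncomputable def a (n : ℕ) : ℤ := ⌊(n + 1 : ℝ) / 2 - Real.sqrt (n + 1) / 2⌋

open Real

lemma sq_mul_add_mul_le_mul (p q x y : ℝ) :
    (p * x + q * y) ^ 2 ≤ (p ^ 2 + q ^ 2) * (x ^ 2 + y ^ 2) := by
  nlinarith [sq_nonneg (p * y - q * x)]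

lemma psi_eq (n : ℕ) (t : ℝ) :
    psi n t = (2 * √n * √(t * (n + 1 - t)) + |n + 1 - 2 * t|) / (n + 1) := by
  have hN : (0 : ℝ) < n + 1 := by positivity
  rw [psi, show 1 - 2 * t / (n + 1) = (n + 1 - 2 * t) / (n + 1) by field_simp, abs_div,
    abs_of_pos hN, add_div, div_mul_eq_mul_div]

lemma psi_le_sqrt (n : ℕ) {t : ℝ} (ht₀ : 0 ≤ t) (ht₁ : t ≤ n + 1) : psi n t ≤ √(n + 1) := by
  have hN : (0 : ℝ) < n + 1 := by positivity
  have key : (2 * √n * √(t * (n + 1 - t)) + |n + 1 - 2 * t|) ^ 2 ≤ (n + 1) ^ 3 :=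
    calc _ ≤ (√n ^ 2 + 1 ^ 2) * ((2 * √(t * (n + 1 - t))) ^ 2 + |n + 1 - 2 * t| ^ 2) := by
          convert sq_mul_add_mul_le_mul (√n) 1 (2 * √(t * (n + 1 - t))) |n + 1 - 2 * t| using 2
          ring
      _ = (n + 1) ^ 3 := by
          rw [sq_sqrt n.cast_nonneg, mul_pow, sq_sqrt (by nlinarith), sq_abs]
          ring
  rw [psi_eq, le_sqrt (by positivity) hN.le, div_pow, div_le_iff₀ (by positivity)]
  linarith

lemma a_nonneg (n : ℕ) : 0 ≤ a n :=
  Int.floor_nonneg.mpr <| by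
    have : √((n : ℝ) + 1) ≤ n + 1 := sqrt_le_self_iff.mpr (.inr (by simp))
    linarith

lemma a_add_one_le (n : ℕ) : (a n : ℝ) + 1 ≤ n + 1 := by
  have hfloor := Int.floor_le ((n + 1 : ℝ) / 2 - √(n + 1) / 2)
  have : 1 ≤ √((n : ℝ) + 1) := one_le_sqrt.mpr (by simp)
  have : (1 : ℝ) ≤ n + 1 := by simp
  rw [← a] at hfloor
  linarith

theorem stmt2_general (n : ℕ) :
    max (psi n (a n)) (psi n (a n + 1)) ≤ Real.sqrt (n + 1) := by
  have ha : (0 : ℝ) ≤ a n := by exact_mod_cast a_nonneg n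
  have ha₁ := a_add_one_le n
  exact max_le (psi_le_sqrt n ha (by linarith)) (psi_le_sqrt n (by linarith) ha₁)

theorem stmt2 (n : ℕ) (hn : 1 ≤ n) :
    max (psi n (a n)) (psi n (a n + 1)) ≤ Real.sqrt (n + 1) :=
  stmt2_general n
end

section
/- For every natural number n ≥ 1, max{ψ(a_n), ψ(a_n+1)} ≥ √n, where a_n = ⌊(n+1)/2 − √(n+1)/2⌋ and ψ(t) = (2√n/(n+1))·√(t(n+1−t)) + |1 − 2t/(n+1)|. -/
/-!
Writing `u = 1 - 2t/(n+1)`, one has `ψ(t) = √n · √(1 - u²) + |u|`, and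
`√n (1 - √(1 - u²)) ≤ √n u² ≤ |u|` as soon as `√n |u| ≤ 1`, so then `ψ(t) ≥ √n`.
The point `t = a_n + 1` lies in `((n+1)/2 - √(n+1)/2, (n+1)/2 - √(n+1)/2 + 1]`, which forces
`√n |u| ≤ 1` because `√n ≤ √(n+1)` and `2√n ≤ n + 1`.
-/

open Real

theorem le_mul_sqrt_one_sub_sq_add {s x : ℝ} (hx : 0 ≤ x) (hsx : s * x ≤ 1) :
    s ≤ s * √(1 - x ^ 2) + x := by
  rcases le_or_gt (x ^ 2) 1 with hx1 | hx1
  · set w := √(1 - x ^ 2)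
    have hw : w ^ 2 = 1 - x ^ 2 := sq_sqrt (by linarith)
    have hw0 : 0 ≤ w := sqrt_nonneg _
    have hw1 : w ≤ 1 := by nlinarith
    rcases le_or_gt s 0 with hs | hs
    · nlinarith
    · have hsw : 0 ≤ s * (1 - w) * w := by positivity
      nlinarith
  · rw [sqrt_eq_zero_of_nonpos (by linarith)]
    nlinarith

theorem psi_eq_sqrt_mul_add_abs (n : ℕ) (t : ℝ) :
    psi n t = √n * √(1 - (1 - 2 * t / (n + 1)) ^ 2) + |1 - 2 * t / (n + 1)| := by
  have hN : (0 : ℝ) < n + 1 := by positivity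
  have hfac : t * (n + 1 - t) = ((n + 1) / 2) ^ 2 * (1 - (1 - 2 * t / (n + 1)) ^ 2) := by
    field_simp; ring
  rw [psi, hfac, sqrt_mul (by positivity), sqrt_sq (by positivity)]
  field_simp

theorem sqrt_mul_abs_one_sub_le_one {n : ℕ} {t : ℝ}
    (hlo : (n + 1) / 2 - √(n + 1) / 2 < t) (hhi : t ≤ (n + 1) / 2 - √(n + 1) / 2 + 1) :
    √n * |1 - 2 * t / (n + 1)| ≤ 1 := by
  have hN : (0 : ℝ) < n + 1 := by positivity
  have hs : √n ≤ √(n + 1) := sqrt_le_sqrt (by linarith)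
  have hsN : √n * √(n + 1) ≤ n + 1 := by
    calc √n * √(n + 1) ≤ √(n + 1) * √(n + 1) := by gcongr
      _ = n + 1 := mul_self_sqrt hN.le
  have h2s : 2 * √n ≤ n + 1 := by
    nlinarith [sq_nonneg (√n - 1), sq_sqrt (Nat.cast_nonneg n : (0 : ℝ) ≤ n)]
  have hu : 1 - 2 * t / (n + 1) = (n + 1 - 2 * t) / (n + 1) := by field_simp
  rw [hu, abs_div, abs_of_pos hN, mul_div_assoc', div_le_one hN]
  have hs0 := sqrt_nonneg (n : ℝ)
  rcases abs_cases (n + 1 - 2 * t) with ⟨h, _⟩ | ⟨h, _⟩ <;> rw [h] <;> nlinarith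

theorem sqrt_le_psi_of_mem {n : ℕ} {t : ℝ}
    (hlo : (n + 1) / 2 - √(n + 1) / 2 < t) (hhi : t ≤ (n + 1) / 2 - √(n + 1) / 2 + 1) :
    √n ≤ psi n t := by
  rw [psi_eq_sqrt_mul_add_abs, ← sq_abs (1 - _)]
  exact le_mul_sqrt_one_sub_sq_add (abs_nonneg _) (sqrt_mul_abs_one_sub_le_one hlo hhi)

theorem stmt3_general (n : ℕ) :
    Real.sqrt n ≤ max (psi n (a n)) (psi n (a n + 1)) := by
  have hle := Int.floor_le ((n + 1 : ℝ) / 2 - √(n + 1) / 2)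
  have hlt := Int.lt_floor_add_one ((n + 1 : ℝ) / 2 - √(n + 1) / 2)
  rw [← a] at hle hlt
  refine le_trans ?_ (le_max_right _ _)
  exact sqrt_le_psi_of_mem hlt (by linarith)

theorem stmt3 (n : ℕ) (hn : 1 ≤ n) :
    Real.sqrt n ≤ max (psi n (a n)) (psi n (a n + 1)) :=
  stmt3_general n
end

section
/- For a natural number n ≥ 1, max{ψ(a_n), ψ(a_n+1)} = √n if and only if n = 1, where a_n = ⌊(n+1)/2 − √(n+1)/2⌋ and ψ(t) = (2√n/(n+1))·√(t(n+1−t)) + |1 − 2t/(n+1)|. -/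
/-!
`ψ(t) > √n` as soon as `0 < |t - (n + 1)/2| < √n`. For `n ≥ 2` the floor bounds put `a_n + 1`
within `√(n + 1)/2 ≤ √n` of the midpoint `(n + 1)/2`; if `a_n + 1` is the midpoint itself, then
`a_n` is at distance `1 < √n` from it. For `n = 1`, `a_1 = 0` and `ψ(0) = ψ(1) = 1`.
-/

/- With `s = n + 1`, `d = |t - s/2|` and `w = √(t (s - t))`, we have `w² = s²/4 - d²` and
`s · psi n t = 2 √n w + 2 d`, while `(2 √n w)² - (s √n - 2 d)² = 4 s d (√n - d)`. -/
theorem sqrt_lt_psi {n : ℕ} {t : ℝ} (hne : t ≠ (n + 1) / 2) (hlt : |t - (n + 1) / 2| < √n) :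
    √n < psi n t := by
  set s : ℝ := n + 1 with hs_def
  set x := √n
  set d := |t - s / 2|
  have hs : 0 < s := by positivity
  have hx2 : x ^ 2 = n := Real.sq_sqrt n.cast_nonneg
  have hd : 0 < d := abs_pos.mpr (sub_ne_zero.mpr hne)
  have hxs : 2 * x ≤ s := by nlinarith [sq_nonneg (x - 1)]
  have hprod : t * (s - t) = s ^ 2 / 4 - d ^ 2 := by
    rw [sq_abs]
    ring
  have hw : √(t * (s - t)) ^ 2 = s ^ 2 / 4 - d ^ 2 := by
    rw [hprod, Real.sq_sqrt (by nlinarith)]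
  have habs : |1 - 2 * t / s| = 2 * d / s := by
    rw [show 1 - 2 * t / s = -(2 / s) * (t - s / 2) by field_simp; ring, abs_mul, abs_neg,
      abs_of_pos (by positivity : 0 < 2 / s)]
    ring
  have hkey : (x * s - 2 * d) ^ 2 < (2 * x * √(t * (s - t))) ^ 2 := by
    have hdiff : (2 * x * √(t * (s - t))) ^ 2 - (x * s - 2 * d) ^ 2 = 4 * s * d * (x - d) := by
      linear_combination (4 * x ^ 2) * hw - 4 * d ^ 2 * hx2 + 4 * d ^ 2 * hs_def
    nlinarith [mul_pos (mul_pos hs hd) (sub_pos.2 hlt)]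
  have hroot := lt_of_pow_lt_pow_left₀ 2 (by positivity) hkey
  rw [psi, ← hs_def, habs, div_mul_eq_mul_div, ← add_div, lt_div_iff₀ hs]
  linarith

theorem sqrt_lt_max_psi_a {n : ℕ} (hn : 2 ≤ n) :
    √n < max (psi n (a n)) (psi n (a n + 1)) := by
  have hfloor : (a n : ℝ) ≤ (n + 1) / 2 - √(n + 1) / 2 := Int.floor_le _
  have hfloor' : (n + 1) / 2 - √(n + 1) / 2 < (a n : ℝ) + 1 := Int.lt_floor_add_one _
  have hn' : (2 : ℝ) ≤ n := by exact_mod_cast hn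
  have hone : 1 < √n := Real.lt_sqrt zero_le_one |>.mpr (by linarith)
  have hsqrt : √(n + 1) ≤ 2 * √n := Real.sqrt_le_iff.mpr
    ⟨by positivity, by rw [mul_pow, Real.sq_sqrt n.cast_nonneg]; linarith⟩
  by_cases hmid : (a n : ℝ) + 1 = (n + 1) / 2
  · refine lt_max_of_lt_left (sqrt_lt_psi (by linarith) ?_)
    rwa [show (a n : ℝ) - (n + 1) / 2 = -1 by linarith, abs_neg, abs_one]
  · refine lt_max_of_lt_right (sqrt_lt_psi hmid (abs_sub_lt_iff.mpr ⟨?_, ?_⟩))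
    all_goals linarith [Real.sqrt_nonneg (n + 1 : ℝ)]

theorem a_one : a 1 = 0 := by
  have hsqrt : √2 < 2 := by
    rw [Real.sqrt_lt' two_pos]
    norm_num
  rw [a, Int.floor_eq_zero_iff]
  norm_num
  linarith

theorem stmt5 (n : ℕ) (hn : 1 ≤ n) :
    max (psi n (a n)) (psi n (a n + 1)) = Real.sqrt n ↔ n = 1 := by
  constructor
  · intro h
    by_contra hne
    exact (sqrt_lt_max_psi_a (by omega)).ne' h
  · rintro rfl
    rw [a_one]
    norm_num [psi]
end

section
/- Let x⁽¹⁾,…,x⁽ⁿ⁺¹⁾ ∈ ℝⁿ with centroid c, let 1 ≤ m ≤ n, r = (1/m)√(m − m(m−1)/n), and for each m-element subset J of {1,…,n+1} set g_J = (1/m)Σ_{j∈J} x⁽ʲ⁾ and y_J = c + (1/r)(c − g_J). Then (1/N)·Σ_J ‖y_J‖² = (1/(n+1))·Σⱼ ‖x⁽ʲ⁾‖², where N = C(n+1, m). -/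
/-!
Put `u j = x j - c`, so that `∑ j, u j = 0` and `y_J = c - (r * m)⁻¹ • ∑ j ∈ J, u j`. Every `u j`
lies in the same number of `m`-subsets, so `∑_J ∑ j ∈ J, u j = 0`, and both sides split as
`‖c‖ ^ 2` plus a multiple of `∑ j, ‖u j‖ ^ 2`. Since `∑ j ∈ J, u j = -∑ k ∉ J, u k`, double counting
the pairs `j ∈ J`, `k ∉ J` gives `∑_J ‖∑ j ∈ J, u j‖ ^ 2 = C(n - 1, m - 1) * ∑ j, ‖u j‖ ^ 2`, and
`r` is exactly the scale for which the two multiples agree.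
-/

open Finset

section

variable {ι : Type*} [Fintype ι] [DecidableEq ι]

lemma card_filter_mem_powersetCard_univ {m : ℕ} (hm : 1 ≤ m) (j : ι) :
    #{J ∈ powersetCard m (univ : Finset ι) | j ∈ J} = (Fintype.card ι - 1).choose (m - 1) := by
  simpa [← singleton_subset_iff] using
    card_filter_powersetCard_subset {j} univ m (subset_univ _) (by simpa using hm)

lemma card_filter_mem_notMem_powersetCard_univ {m : ℕ} (hm : 1 ≤ m) {j k : ι} (hjk : j ≠ k) :
    #{J ∈ powersetCard m (univ : Finset ι) | j ∈ J ∧ k ∉ J} =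
      (Fintype.card ι - 2).choose (m - 1) := by
  have h : {J ∈ powersetCard m (univ : Finset ι) | j ∈ J ∧ k ∉ J} =
      {J ∈ powersetCard m (univ.erase k) | {j} ⊆ J} := by
    ext J
    simp [subset_erase, and_comm, and_left_comm]
  rw [h, card_filter_powersetCard_subset _ _ _ (by simpa using hjk) (by simpa using hm),
    card_erase_of_mem (mem_univ _), card_singleton, card_univ, Nat.sub_sub]

lemma sum_powersetCard_sum {M : Type*} [AddCommMonoid M] {m : ℕ} (hm : 1 ≤ m) (u : ι → M) :
    ∑ J ∈ powersetCard m (univ : Finset ι), ∑ j ∈ J, u j =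
      (Fintype.card ι - 1).choose (m - 1) • ∑ j, u j := by
  rw [sum_comm' (t' := univ) (s' := fun j => {J ∈ powersetCard m univ | j ∈ J})
    (fun J j => by simp), smul_sum]
  simp [card_filter_mem_powersetCard_univ hm]

variable {E : Type*} [NormedAddCommGroup E] [InnerProductSpace ℝ E]

open RealInnerProductSpace

lemma sum_norm_add_sq_of_sum_eq_zero {κ : Type*} (s : Finset κ) (c : E) {w : κ → E}
    (hw : ∑ i ∈ s, w i = 0) :
    ∑ i ∈ s, ‖c + w i‖ ^ 2 = #s * ‖c‖ ^ 2 + ∑ i ∈ s, ‖w i‖ ^ 2 := by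
  simp_rw [norm_add_sq_real, sum_add_distrib, ← mul_sum, ← inner_sum, hw, inner_zero_right,
    sum_const, nsmul_eq_mul]
  ring

lemma sum_powersetCard_norm_sum_sq {m : ℕ} (hm : 1 ≤ m) {u : ι → E} (hu : ∑ j, u j = 0) :
    ∑ J ∈ powersetCard m (univ : Finset ι), ‖∑ j ∈ J, u j‖ ^ 2 =
      (Fintype.card ι - 2).choose (m - 1) * ∑ j, ‖u j‖ ^ 2 := by
  have hsplit (J : Finset ι) : ‖∑ j ∈ J, u j‖ ^ 2 =
      -∑ j, ∑ k, if j ∈ J ∧ k ∉ J then ⟪u j, u k⟫ else 0 := by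
    have hcompl : ∑ j ∈ J, u j = -∑ k ∈ Jᶜ, u k :=
      eq_neg_of_add_eq_zero_left ((sum_add_sum_compl J u).trans hu)
    rw [← real_inner_self_eq_norm_sq]
    nth_rewrite 2 [hcompl]
    simp only [inner_neg_right, sum_inner, inner_sum, ite_and, ← mem_compl, sum_ite_irrel,
      sum_const_zero, sum_ite_mem, univ_inter]
    exact congrArg Neg.neg sum_comm
  calc ∑ J ∈ powersetCard m (univ : Finset ι), ‖∑ j ∈ J, u j‖ ^ 2
      = -∑ j, ∑ k,
          (#{J ∈ powersetCard m (univ : Finset ι) | j ∈ J ∧ k ∉ J} : ℝ) * ⟪u j, u k⟫ := by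
        simp_rw [hsplit, sum_neg_distrib, sum_comm (s := powersetCard m univ), sum_ite,
          sum_const_zero, add_zero, sum_const, nsmul_eq_mul]
    _ = _ := by
        rw [mul_sum, ← sum_neg_distrib]
        refine sum_congr rfl fun j _ => ?_
        have hdiag : #{J ∈ powersetCard m (univ : Finset ι) | j ∈ J ∧ j ∉ J} = 0 := by simp
        rw [← add_sum_erase _ _ (mem_univ j), hdiag, Nat.cast_zero, zero_mul, zero_add,
          sum_congr rfl fun k hk => by
            rw [card_filter_mem_notMem_powersetCard_univ hm (ne_of_mem_erase hk).symm],
          ← mul_sum, sum_erase_eq_sub (mem_univ j), ← inner_sum, hu, inner_zero_right,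
          real_inner_self_eq_norm_sq]
        ring

lemma sum_powersetCard_norm_add_smul_sub_smul_sum {m : ℕ} (hm : 1 ≤ m) {x : ι → E} {c : E}
    (hc : ∑ j, (x j - c) = 0) (t : ℝ) :
    ∑ J ∈ powersetCard m (univ : Finset ι), ‖c + t • (c - (m : ℝ)⁻¹ • ∑ j ∈ J, x j)‖ ^ 2 =
      (Fintype.card ι).choose m * ‖c‖ ^ 2 +
        (t / m) ^ 2 * ((Fintype.card ι - 2).choose (m - 1) * ∑ j, ‖x j - c‖ ^ 2) := by
  have hm0 : (m : ℝ) ≠ 0 := by positivity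
  have hy : ∀ J ∈ powersetCard m (univ : Finset ι),
      c + t • (c - (m : ℝ)⁻¹ • ∑ j ∈ J, x j) = c + (-(t / m)) • ∑ j ∈ J, (x j - c) := by
    intro J hJ
    rw [sum_sub_distrib, sum_const, (mem_powersetCard.1 hJ).2, ← Nat.cast_smul_eq_nsmul ℝ]
    match_scalars <;> field_simp
  rw [sum_congr rfl fun J hJ => by rw [hy J hJ], sum_norm_add_sq_of_sum_eq_zero _ _
    (by rw [← smul_sum, sum_powersetCard_sum hm, hc, smul_zero, smul_zero])]
  simp_rw [norm_smul, mul_pow, ← mul_sum, sum_powersetCard_norm_sum_sq hm hc, card_powersetCard,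
    card_univ, norm_neg, Real.norm_eq_abs, sq_abs]

end

lemma Nat.add_one_choose_mul_eq {n m : ℕ} (hm : 1 ≤ m) :
    (n + 1).choose m * (m * (n + 1 - m)) = (n + 1) * n * (n - 1).choose (m - 1) := by
  obtain ⟨k, rfl⟩ := Nat.exists_eq_add_of_le' hm
  rcases n with _ | l
  · simp
  rw [show l + 1 + 1 - (k + 1) = l + 1 - k by omega, Nat.add_sub_cancel, Nat.add_sub_cancel]
  calc (l + 1 + 1).choose (k + 1) * ((k + 1) * (l + 1 - k))
      = (l + 1 + 1) * ((l + 1).choose k * (l + 1 - k)) := by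
        rw [← mul_assoc, ← Nat.add_one_mul_choose_eq]; ring
    _ = (l + 1 + 1) * (l + 1) * l.choose k := by
        rw [← Nat.choose_mul_succ_eq]; ring

lemma one_div_mul_sqrt_sq {m n : ℝ} (hm : 0 ≤ m) (hn : 0 < n) (hmn : m ≤ n + 1) :
    ((1 / m) * √(m - m * (m - 1) / n)) ^ 2 = (n - m + 1) / (m * n) := by
  have hrad : m - m * (m - 1) / n = m * (n - m + 1) / n := by field_simp; ring
  rw [mul_pow, Real.sq_sqrt (by rw [hrad]; exact div_nonneg (by nlinarith) hn.le), hrad]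
  rcases hm.eq_or_lt with rfl | hm
  · simp
  field_simp

theorem stmt10 (m n : ℕ) (hm : 1 ≤ m) (hmn : m ≤ n)
    (x : Fin (n + 1) → EuclideanSpace ℝ (Fin n))
    (c : EuclideanSpace ℝ (Fin n)) (hc : c = ((n : ℝ) + 1)⁻¹ • ∑ j, x j)
    (r : ℝ) (hr : r = (1 / (m : ℝ)) * Real.sqrt ((m : ℝ) - m * (m - 1) / n)) :
    (1 / ((n + 1).choose m : ℝ)) *
        ∑ J ∈ Finset.powersetCard m (Finset.univ : Finset (Fin (n + 1))),
          ‖c + r⁻¹ • (c - (m : ℝ)⁻¹ • ∑ j ∈ J, x j)‖ ^ 2 =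
      (1 / ((n : ℝ) + 1)) * ∑ j, ‖x j‖ ^ 2 := by
  have hn : (0 : ℝ) < n := by exact_mod_cast (show 0 < n by omega)
  have hcentroid : ∑ j, (x j - c) = 0 := by
    rw [sum_sub_distrib, sum_const, card_univ, Fintype.card_fin, ← Nat.cast_smul_eq_nsmul ℝ, hc,
      smul_smul, Nat.cast_add_one, mul_inv_cancel₀ (by positivity), one_smul, sub_self]
  have hx : ∑ j, ‖x j‖ ^ 2 = ∑ j, ‖c + (x j - c)‖ ^ 2 := by simp only [add_sub_cancel]
  rw [sum_powersetCard_norm_add_smul_sub_smul_sum hm hcentroid, hx,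
    sum_norm_add_sq_of_sum_eq_zero _ _ hcentroid]
  have hr2 : r ^ 2 = ((n : ℝ) - m + 1) / (m * n) :=
    hr ▸ one_div_mul_sqrt_sq (by positivity) hn (by norm_cast; omega)
  have hchoose := congrArg (Nat.cast : ℕ → ℝ) (Nat.add_one_choose_mul_eq (n := n) hm)
  push_cast [Nat.cast_sub (show m ≤ n + 1 by omega)] at hchoose
  have hN : ((n + 1).choose m : ℝ) ≠ 0 := Nat.cast_ne_zero.2 (Nat.choose_pos (by omega)).ne'
  have hnm : (n : ℝ) - m + 1 ≠ 0 := by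
    have : (m : ℝ) ≤ n := by exact_mod_cast hmn
    linarith
  rw [card_univ, Fintype.card_fin, show n + 1 - 2 = n - 1 by omega, div_pow, inv_pow, hr2]
  field_simp
  push_cast
  linear_combination (-∑ j, ‖x j - c‖ ^ 2) * hchoose
end

section
/- For all natural numbers n ≥ 2, the maximizer index k_n ∈ {a_n, a_n+1} of ψ (i.e. ψ(k_n) = max{ψ(a_n), ψ(a_n+1)}) satisfies k_n ≤ n/2, where a_n = ⌊(n+1)/2 − √(n+1)/2⌋. -/
noncomputable def k (n : ℕ) : ℤ := if psi n (a n) < psi n (a n + 1) then a n + 1 else a n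

lemma k_le_a_add_one (n : ℕ) : k n ≤ a n + 1 := by
  unfold k
  split_ifs <;> omega

lemma two_mul_a_add_two_le {n : ℕ} (hn : 2 ≤ n) (h3 : n ≠ 3) : 2 * a n + 2 ≤ n := by
  have hfloor : (2 * a n : ℝ) ≤ n + 1 - Real.sqrt (n + 1) := by
    have := Int.floor_le ((n + 1 : ℝ) / 2 - Real.sqrt (n + 1) / 2)
    rw [← a] at this
    linarith
  have hn' : (2 : ℝ) ≤ n := by exact_mod_cast hn
  have hsqrt_gt_one : 1 < Real.sqrt (n + 1) := Real.lt_sqrt zero_le_one |>.mpr (by linarith)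
  have hlt : 2 * a n < n := by
    have : (2 * a n : ℝ) < n := by linarith
    exact_mod_cast this
  have hlt_of_four_le : 4 ≤ n → 2 * a n < n - 1 := fun h4 => by
    have h4' : (4 : ℝ) ≤ n := by exact_mod_cast h4
    have : 2 < Real.sqrt (n + 1) := Real.lt_sqrt zero_le_two |>.mpr (by linarith)
    have : (2 * a n : ℝ) < n - 1 := by linarith
    exact_mod_cast this
  omega

lemma sqrt_four : Real.sqrt 4 = 2 := by
  rw [show (4 : ℝ) = 2 ^ 2 by norm_num, Real.sqrt_sq zero_le_two]

lemma a_three : a 3 = 1 := by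
  rw [a, Int.floor_eq_iff]
  norm_num [sqrt_four]

lemma psi_three_two_le_psi_three_one : psi 3 2 ≤ psi 3 1 := by
  have hsqrt3 : Real.sqrt 3 * Real.sqrt 3 = 3 := Real.mul_self_sqrt (by norm_num)
  norm_num [psi, sqrt_four]
  nlinarith [Real.sqrt_nonneg 3]

lemma k_three : k 3 = 1 := by
  rw [k, a_three, if_neg (not_lt.mpr ?_)]
  exact_mod_cast psi_three_two_le_psi_three_one

theorem stmt17 (n : ℕ) (hn : 2 ≤ n) : (k n : ℝ) ≤ n / 2 := by
  rcases eq_or_ne n 3 with rfl | h3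
  · rw [k_three]
    norm_num
  · have hk : 2 * k n ≤ n := by
      linarith [k_le_a_add_one n, two_mul_a_add_two_le hn h3]
    have hk' : (2 * k n : ℝ) ≤ n := by exact_mod_cast hk
    linarith
end
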